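/- Let N = (V,E,X) be an undirected phylogenetic network with distinguished edge e_ρ and desired indegrees d⁻ with 1 ≤ d⁻(v) ≤ deg(v), and suppose ∑_{v∈V} d⁻(v) = |E| + 1. Then (N, e_ρ, d⁻) is orientable if and only if (N, e_ρ, d⁻) has no degree cut. -/

import Mathlib

open Classical

/-- Indegree of a vertex in a digraph given by a relation. -/
noncomputable def inDeg {W : Type} (D : W → W → Prop) (b : W) : ℕ :=
  Nat.card {a : W // D a b}

/-- Outdegree of a vertex in a digraph given by a relation. -/
noncomputable def outDeg {W : Type} (D : W → W → Prop) (a : W) : ℕ :=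
  Nat.card {b : W // D a b}

/-- A digraph is acyclic if it has no directed cycle. -/
def DigraphAcyclic {W : Type} (D : W → W → Prop) : Prop :=
  ∀ a : W, ¬ Relation.TransGen D a a

/-- `D` is an orientation of the undirected graph `H`: every arc of `D` lies on an
edge of `H`, and every edge of `H` is given exactly one direction. -/
def IsOrientationOf {W : Type} (H : SimpleGraph W) (D : W → W → Prop) : Prop :=
  (∀ a b, D a b → H.Adj a b) ∧ (∀ a b, H.Adj a b → (D a b ↔ ¬ D b a))

/-- The graph obtained from `G` by subdividing the edge `{u,v}` with a new vertex
(represented by `none`). -/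
def subdivide {V : Type} (G : SimpleGraph V) (u v : V) : SimpleGraph (Option V) where
  Adj a b := match a, b with
    | some a', some b' => G.Adj a' b' ∧ ¬ (s(a', b') = s(u, v))
    | some a', none => a' = u ∨ a' = v
    | none, some b' => b' = u ∨ b' = v
    | none, none => False
  symm := by
    constructor
    intro a b h
    match a, b with
    | some a', some b' =>
        exact ⟨h.1.symm, fun he => h.2 (by rwa [Sym2.eq_swap] at he)⟩
    | some a', none => exact h
    | none, some b' => exact h
  loopless := by
    constructor
    intro a h
    match a with
    | some a' => exact G.loopless.irrefl a' h.1
    | none => exact h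


/-- An undirected (not necessarily binary) phylogenetic network: a connected
graph with no degree-2 vertices. -/
def IsUndirNet {V : Type} [Fintype V] (G : SimpleGraph V) [DecidableRel G.Adj] : Prop :=
  G.Connected ∧ ∀ w : V, G.degree w ≠ 2

/-- An orientation of `(N, e_ρ, d⁻)`: an acyclic orientation of the graph obtained
by subdividing the edge `{u,v}` with a root `ρ`, in which `ρ` has indegree `0`
(both its edges are directed outward) and every vertex `w` of `N` has indegree
exactly `d w`. -/
def IsDegOrientation {V : Type} (G : SimpleGraph V) (u v : V) (d : V → ℕ)
    (D : Option V → Option V → Prop) : Prop :=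
  IsOrientationOf (subdivide G u v) D ∧ DigraphAcyclic D ∧ inDeg D none = 0 ∧
    ∀ w : V, inDeg D (some w) = d w

/-- A degree cut for `(G, {u,v}, d)`: a pair `(V', E')` where `E'` is an edge-cut of
the subdivided graph separating the root from every vertex of `V'`, each edge of
`E'` is incident to exactly one element of `V'`, and each `w ∈ V'` is incident to
fewer than `d w` edges of `E'`. -/
def IsDegCut {V : Type} (G : SimpleGraph V) (u v : V) (d : V → ℕ)
    (V' : Set V) (E' : Set (Sym2 (Option V))) : Prop :=
  E' ⊆ (subdivide G u v).edgeSet ∧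
  ¬ ((subdivide G u v).deleteEdges E').Connected ∧
  (∀ w ∈ V', ¬ ((subdivide G u v).deleteEdges E').Reachable none (some w)) ∧
  (∀ e ∈ E', ∃! w : V, w ∈ V' ∧ (some w : Option V) ∈ e) ∧
  (∀ w ∈ V', {e ∈ E' | (some w : Option V) ∈ e}.ncard < d w)

/-!
If `D` is an orientation and `(V', E')` a degree cut, take a `D`-minimal vertex `x` among those
that `E'` separates from `ρ` (it exists by acyclicity). All in-arcs of `x` come from vertices
still reachable from `ρ`, so they all lie in `E'`. If `x ∈ V'` these are `d⁻(x)` edges of `E'`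
at `x`, too many; otherwise one of them (there is one as `d⁻(x) ≥ 1`) has its `V'`-endpoint
reachable from `ρ`.

Conversely, grow a set from `ρ`, admitting a vertex as soon as at least `d⁻` of its neighbours
have been admitted. If this stops before every vertex is admitted, the edges leaving the
admitted set form a degree cut, with `V'` the vertices left out. Otherwise, direct each edge
from the endpoint admitted first (ties broken arbitrarily): this is an acyclic orientation in
which every vertex has indegree at least `d⁻`, and as `N_ρ` has `|E| + 1 = ∑ d⁻` edges,
the indegrees are exactly `d⁻`.
-/

open Finset

section Orientation

variable {W : Type}

lemma inDeg_eq_card [Fintype W] (D : W → W → Prop) (b : W) : inDeg D b = #{a | D a b} := by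
  rw [inDeg, Nat.card_eq_fintype_card, Fintype.card_subtype]

lemma IsOrientationOf.sum_inDeg [Fintype W] {H : SimpleGraph W} {D : W → W → Prop}
    (hD : IsOrientationOf H D) : ∑ b, inDeg D b = H.edgeSet.ncard := by
  have harcs : ∑ b, inDeg D b = #{p : W × W | D p.1 p.2} := by
    simp only [inDeg_eq_card, card_filter]
    rw [Fintype.sum_prod_type, sum_comm]
  rw [harcs, ← H.coe_edgeFinset, Set.ncard_coe_finset]
  refine card_bij (fun p _ => s(p.1, p.2)) (fun p hp => ?_) (fun p hp q hq hpq => ?_)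
    (fun e he => ?_)
  · simpa using hD.1 _ _ (mem_filter.mp hp).2
  · simp only [mem_filter_univ] at hp hq
    rcases Sym2.eq_iff.mp hpq with ⟨h1, h2⟩ | ⟨h1, h2⟩
    · exact Prod.ext h1 h2
    · rw [h1, h2] at hp
      exact absurd hq ((hD.2 _ _ (hD.1 _ _ hp)).mp hp)
  · induction e using Sym2.ind with
    | _ a b =>
      have hab : H.Adj a b := by simpa using he
      by_cases h : D a b
      · exact ⟨(a, b), by simpa using h, rfl⟩
      · exact ⟨(b, a), by simpa using (hD.2 _ _ hab.symm).mpr h, Sym2.eq_swap⟩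

lemma DigraphAcyclic.wellFounded [Finite W] {D : W → W → Prop} (hD : DigraphAcyclic D) :
    WellFounded D :=
  have : Std.Irrefl (Relation.TransGen D) := ⟨hD⟩
  Subrelation.wf Relation.TransGen.single (Finite.wellFounded_of_trans_of_irrefl _)

variable {α : Type} [LinearOrder α] (H : SimpleGraph W)

def rankOrientation (f : W → α) (a b : W) : Prop :=
  H.Adj a b ∧ f a < f b

variable {f : W → α}

lemma isOrientationOf_rankOrientation (hf : Function.Injective f) :
    IsOrientationOf H (rankOrientation H f) := by
  refine ⟨fun a b h => h.1, fun a b hab => ?_⟩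
  have : f a ≠ f b := hf.ne (H.ne_of_adj hab)
  simp only [rankOrientation, hab, hab.symm, true_and, not_lt]
  exact ⟨le_of_lt, fun h => lt_of_le_of_ne h this⟩

lemma rankOrientation_transGen_lt {a b : W} (h : Relation.TransGen (rankOrientation H f) a b) :
    f a < f b :=
  h.trans_induction_on (fun h => h.2) fun _ _ => lt_trans

lemma digraphAcyclic_rankOrientation : DigraphAcyclic (rankOrientation H f) := fun a h =>
  lt_irrefl (f a) (rankOrientation_transGen_lt H h)

end Orientation

section Greedy

variable {W : Type} [Fintype W] (H : SimpleGraph W) (r : W → ℕ)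

noncomputable def greedyStep (S : Finset W) : Finset W :=
  {x | x ∈ S ∨ r x ≤ #{y ∈ S | H.Adj y x}}

noncomputable def greedySet : ℕ → Finset W
  | 0 => ∅
  | k + 1 => greedyStep H r (greedySet k)

variable {H r} in
lemma mem_greedyStep {S : Finset W} {x : W} :
    x ∈ greedyStep H r S ↔ x ∈ S ∨ r x ≤ #{y ∈ S | H.Adj y x} := by
  simp [greedyStep]

lemma greedySet_mono : Monotone (greedySet H r) :=
  monotone_nat_of_le_succ fun _ _ hx => mem_greedyStep.mpr (Or.inl hx)

lemma exists_greedyStep_greedySet_eq :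
    ∃ n, greedyStep H r (greedySet H r n) = greedySet H r n := by
  obtain ⟨n, hn⟩ :=
    WellFoundedGT.monotone_chain_condition ⟨greedySet H r, greedySet_mono H r⟩
  exact ⟨n, (hn (n + 1) n.le_succ).symm⟩

variable {H r}

lemma card_adj_lt_of_greedyStep_eq {S : Finset W} (hS : greedyStep H r S = S) {x : W}
    (hx : x ∉ S) : #{y ∈ S | H.Adj y x} < r x := by
  by_contra! h
  exact hx (hS ▸ mem_greedyStep.mpr (Or.inr h))

lemma exists_orientation_le_inDeg (hcover : ∀ x, ∃ k, x ∈ greedySet H r k) :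
    ∃ D, IsOrientationOf H D ∧ DigraphAcyclic D ∧ ∀ x, r x ≤ inDeg D x := by
  let rank : W → ℕ ×ₗ Fin (Fintype.card W) := fun x =>
    toLex (Nat.find (hcover x), Fintype.equivFin W x)
  have hrank : Function.Injective rank := fun x y h =>
    (Fintype.equivFin W).injective (Prod.ext_iff.mp (toLex.injective h)).2
  refine ⟨rankOrientation H rank, isOrientationOf_rankOrientation H hrank,
    digraphAcyclic_rankOrientation H, fun x => ?_⟩
  obtain ⟨k, hk⟩ : ∃ k, Nat.find (hcover x) = k + 1 :=
    Nat.exists_eq_add_one.mpr (Nat.pos_of_ne_zero fun h0 => by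
      simpa [greedySet, h0] using Nat.find_spec (hcover x))
  have hx : x ∈ greedySet H r (k + 1) := hk ▸ Nat.find_spec (hcover x)
  have hxk : x ∉ greedySet H r k := Nat.find_min (hcover x) (by omega)
  rw [greedySet, mem_greedyStep, or_iff_right hxk] at hx
  refine hx.trans (inDeg_eq_card _ x ▸ card_le_card fun y hy => ?_)
  obtain ⟨hyk, hyx⟩ := mem_filter.mp hy
  refine (mem_filter_univ y).mpr ⟨hyx, Prod.Lex.toLex_lt_toLex.mpr (Or.inl ?_)⟩
  exact hk ▸ Nat.lt_succ_of_le (Nat.find_min' _ hyk)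

lemma exists_orientation_inDeg_eq (hcover : ∀ x, ∃ k, x ∈ greedySet H r k)
    (hsum : ∑ x, r x = H.edgeSet.ncard) :
    ∃ D, IsOrientationOf H D ∧ DigraphAcyclic D ∧ ∀ x, inDeg D x = r x := by
  obtain ⟨D, hD, hacyc, hle⟩ := exists_orientation_le_inDeg hcover
  have hsum_eq : ∑ x, r x = ∑ x, inDeg D x := hsum.trans hD.sum_inDeg.symm
  exact ⟨D, hD, hacyc, fun x =>
    ((sum_eq_sum_iff_of_le fun x _ => hle x).mp hsum_eq x (mem_univ x)).symm⟩

end Greedy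

section Subdivision

variable {V : Type} (G : SimpleGraph V) (u v : V)

lemma edgeSet_subdivide :
    (subdivide G u v).edgeSet = insert s(none, some u)
      (insert s(none, some v) (Sym2.map some '' (G.edgeSet \ {s(u, v)}))) := by
  ext e
  induction e using Sym2.ind with
  | _ x y =>
    cases x with
    | none => cases y <;> simp [subdivide, Sym2.exists]
    | some a =>
      cases y with
      | none => simp [subdivide, Sym2.exists]
      | some b =>
        have hmap : s(some a, some b) = Sym2.map some s(a, b) := rfl
        rw [Set.mem_insert_iff, Set.mem_insert_iff, hmap,
          (Sym2.map.injective (Option.some_injective V)).mem_set_image, ← hmap]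
        simp [subdivide]

variable {G u v}

lemma ncard_edgeSet_subdivide [Finite V] (he : G.Adj u v) :
    (subdivide G u v).edgeSet.ncard = G.edgeSet.ncard + 1 := by
  have hmem : s(u, v) ∈ G.edgeSet := he
  have hroot (x : Option V) : s(none, x) ∉ Sym2.map some '' (G.edgeSet \ {s(u, v)}) := by
    rintro ⟨z, -, hz⟩
    have : none ∈ Sym2.map some z := hz ▸ Sym2.mem_mk_left none x
    simp [Sym2.mem_map] at this
  have hu : s(none, some u) ∉ insert s(none, some v) (Sym2.map some '' (G.edgeSet \ {s(u, v)})) :=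
    by simp [G.ne_of_adj he, hroot]
  rw [edgeSet_subdivide, Set.ncard_insert_of_notMem hu, Set.ncard_insert_of_notMem (hroot _),
    Set.ncard_image_of_injective _ (Sym2.map.injective (Option.some_injective V)),
    Set.ncard_sdiff_singleton_of_mem hmem]
  have := (Set.ncard_pos G.edgeSet.toFinite).mpr ⟨_, hmem⟩
  omega

end Subdivision

def SimpleGraph.edgeBoundary {W : Type} (H : SimpleGraph W) (S : Set W) : Set (Sym2 W) :=
  {e | e ∈ H.edgeSet ∧ ∃ a ∈ S, ∃ b ∉ S, e = s(a, b)}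

lemma SimpleGraph.Reachable.mem_of_deleteEdges_edgeBoundary {W : Type} {H : SimpleGraph W}
    {S : Set W} {x y : W} (h : (H.deleteEdges (H.edgeBoundary S)).Reachable x y)
    (hx : x ∈ S) : y ∈ S := by
  obtain ⟨p⟩ := h
  induction p with
  | nil => exact hx
  | cons hadj _ ih =>
    obtain ⟨hadj, hcut⟩ := SimpleGraph.deleteEdges_adj.mp hadj
    exact ih (by_contra fun hz => hcut ⟨hadj, _, hx, _, hz, rfl⟩)

section DegCut

variable {V : Type} {G : SimpleGraph V} {u v : V} {d : V → ℕ}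

def rootedDemand (d : V → ℕ) : Option V → ℕ := fun x => x.elim 0 d

variable [Fintype V]

lemma exists_isDegOrientation (he : G.Adj u v) (hsum : ∑ w, d w = G.edgeSet.ncard + 1)
    (hcover : ∀ x, ∃ k, x ∈ greedySet (subdivide G u v) (rootedDemand d) k) :
    ∃ D, IsDegOrientation G u v d D := by
  have hsum' : ∑ x, rootedDemand d x = (subdivide G u v).edgeSet.ncard := by
    rw [Fintype.sum_option, ncard_edgeSet_subdivide he, ← hsum]
    simp [rootedDemand]
  obtain ⟨D, hD, hacyc, hdeg⟩ := exists_orientation_inDeg_eq hcover hsum'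
  exact ⟨D, hD, hacyc, hdeg none, fun w => hdeg (some w)⟩

lemma isDegCut_of_greedyStep_eq {S : Finset (Option V)}
    (hS : greedyStep (subdivide G u v) (rootedDemand d) S = S) (hS_univ : S ≠ univ) :
    IsDegCut G u v d {w | some w ∉ S} ((subdivide G u v).edgeBoundary S) := by
  have hroot : none ∈ S := hS ▸ mem_greedyStep.mpr (Or.inr (Nat.zero_le _))
  obtain ⟨y, hy⟩ : ∃ y, y ∉ S := by simpa [eq_univ_iff_forall] using hS_univ
  refine ⟨fun e he => he.1, fun hc => hy ?_, fun w hw hreach => hw ?_, ?_, fun w hw => ?_⟩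
  · exact (hc.preconnected none y).mem_of_deleteEdges_edgeBoundary hroot
  · exact hreach.mem_of_deleteEdges_edgeBoundary hroot
  · rintro e ⟨-, a, ha, b, hb, rfl⟩
    obtain ⟨w, rfl⟩ : ∃ w, b = some w :=
      Option.ne_none_iff_exists'.mp fun h => hb (h ▸ hroot)
    refine ⟨w, ⟨hb, Sym2.mem_mk_right _ _⟩, fun w' ⟨hw', hmem⟩ => ?_⟩
    rcases Sym2.mem_iff.mp hmem with rfl | h
    exacts [absurd ha hw', Option.some_injective _ h]
  · have hsub : {e ∈ (subdivide G u v).edgeBoundary S | some w ∈ e} ⊆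
        (fun y => s(y, some w)) '' ↑({y ∈ S | (subdivide G u v).Adj y (some w)}) := by
      rintro e ⟨⟨hadj, a, ha, b, hb, rfl⟩, hmem⟩
      rcases Sym2.mem_iff.mp hmem with rfl | rfl
      exacts [absurd ha hw, ⟨a, mem_filter.mpr ⟨ha, hadj⟩, rfl⟩]
    calc _ ≤ _ := Set.ncard_le_ncard hsub
      _ ≤ _ := Set.ncard_image_le
      _ < d w := (Set.ncard_coe_finset _).trans_lt (card_adj_lt_of_greedyStep_eq hS hw)

end DegCut

section Forward

variable {V : Type} [Finite V] {G : SimpleGraph V} {u v : V} {d : V → ℕ}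

lemma IsDegOrientation.not_isDegCut (hd : ∀ w, 1 ≤ d w) {D : Option V → Option V → Prop}
    (hD : IsDegOrientation G u v d D) (V' : Set V) (E' : Set (Sym2 (Option V))) :
    ¬ IsDegCut G u v d V' E' := by
  obtain ⟨⟨hDadj, -⟩, hacyc, -, hdeg⟩ := hD
  rintro ⟨-, hconn, hsep, huniq, hcount⟩
  set Gd := (subdivide G u v).deleteEdges E'
  obtain ⟨y, hy⟩ : ∃ y, ¬ Gd.Reachable none y := by
    by_contra! h
    exact hconn ((SimpleGraph.connected_iff_exists_forall_reachable _).mpr ⟨none, h⟩)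
  obtain ⟨x, hx, hmin⟩ := hacyc.wellFounded.has_min {y | ¬ Gd.Reachable none y} ⟨y, hy⟩
  have hin : ∀ z, D z x → Gd.Reachable none z := fun z hz => not_not.mp fun h => hmin z h hz
  have hcut : ∀ z, D z x → s(z, x) ∈ E' := fun z hz => by_contra fun h =>
    hx ((hin z hz).trans (SimpleGraph.deleteEdges_adj.mpr ⟨hDadj _ _ hz, h⟩).reachable)
  cases x with
  | none => exact hx (SimpleGraph.Reachable.refl _)
  | some a =>
    by_cases ha : a ∈ V'
    · refine (hcount a ha).not_ge ?_
      rw [← hdeg a]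
      exact Set.ncard_le_ncard_of_injOn (fun z => s(z, some a))
        (fun z hz => ⟨hcut z hz, Sym2.mem_mk_right _ _⟩) fun z _ z' _ h => Sym2.congr_left.mp h
    · obtain ⟨⟨z, hz⟩⟩ : Nonempty {z // D z (some a)} :=
        (Nat.card_pos_iff.mp (hd a |>.trans_eq (hdeg a).symm)).1
      obtain ⟨w, ⟨hw, hwe⟩, -⟩ := huniq _ (hcut z hz)
      rcases Sym2.mem_iff.mp hwe with rfl | h
      · exact hsep w hw (hin _ hz)
      · exact ha (Option.some_injective _ h ▸ hw)

end Forward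

theorem deg_orientable_iff_no_degcut_general {V : Type} [Fintype V]
    (G : SimpleGraph V) [DecidableRel G.Adj]
    (u v : V) (he : G.Adj u v) (d : V → ℕ)
    (hd : ∀ w : V, 1 ≤ d w ∧ d w ≤ G.degree w)
    (hsum : ∑ w : V, d w = G.edgeSet.ncard + 1) :
    (∃ D : Option V → Option V → Prop, IsDegOrientation G u v d D) ↔
      ¬ ∃ (V' : Set V) (E' : Set (Sym2 (Option V))), IsDegCut G u v d V' E' := by
  refine ⟨fun ⟨D, hD⟩ ⟨V', E', hcut⟩ => hD.not_isDegCut (fun w => (hd w).1) V' E' hcut,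
    fun hno => ?_⟩
  obtain ⟨n, hn⟩ := exists_greedyStep_greedySet_eq (subdivide G u v) (rootedDemand d)
  by_cases hcover : greedySet (subdivide G u v) (rootedDemand d) n = univ
  · exact exists_isDegOrientation he hsum fun x => ⟨n, hcover ▸ mem_univ x⟩
  · exact absurd ⟨_, _, isDegCut_of_greedyStep_eq hn hcover⟩ hno

/-- Characterization: with `∑ d⁻(v) = |E| + 1`, the triple `(N, e_ρ, d⁻)` is
orientable iff it has no degree cut. -/
theorem deg_orientable_iff_no_degcut {V X : Type} [Fintype V] [DecidableEq V]
    (G : SimpleGraph V) [DecidableRel G.Adj] (hnet : IsUndirNet G)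
    (labels : X ≃ {w : V // G.degree w = 1})
    (u v : V) (he : G.Adj u v) (d : V → ℕ)
    (hd : ∀ w : V, 1 ≤ d w ∧ d w ≤ G.degree w)
    (hsum : ∑ w : V, d w = G.edgeSet.ncard + 1) :
    (∃ D : Option V → Option V → Prop, IsDegOrientation G u v d D) ↔
      ¬ ∃ (V' : Set V) (E' : Set (Sym2 (Option V))), IsDegCut G u v d V' E' :=
  deg_orientable_iff_no_degcut_general G u v he d hd hsum
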